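/- For every Laver tree T ⊆ ω^{<ω} and every Borel function f : [T] → 2^ω there is a Laver tree S ⊆ T such that f restricted to [S] is continuous. -/

import Mathlib

open Set

/-- The initial segment `r ↾ n` of a point of Baire space, as a finite sequence. -/
def seqTake (r : ℕ → ℕ) (n : ℕ) : List ℕ := List.ofFn fun i : Fin n => r i

/-- `[T]`, the set of infinite branches of a tree `T ⊆ ω^{<ω}`. -/
def branches (T : Set (List ℕ)) : Set (ℕ → ℕ) := {r | ∀ n, seqTake r n ∈ T}

/-- `T` is a Laver tree with stem `s`: `T` is closed under initial segments, `s ∈ T` is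
comparable with every element of `T`, and every `t ∈ T` extending `s` has infinitely many
immediate successors in `T`. -/
def IsLaverTreeWithStem (T : Set (List ℕ)) (s : List ℕ) : Prop :=
  s ∈ T ∧ (∀ t ∈ T, ∀ u : List ℕ, u <+: t → u ∈ T) ∧
    (∀ t ∈ T, t <+: s ∨ s <+: t) ∧
    (∀ t ∈ T, s <+: t → {n : ℕ | t ++ [n] ∈ T}.Infinite)

/-- A Laver tree: a (nonempty) tree `T ⊆ ω^{<ω}` with a stem. -/
def IsLaverTree (T : Set (List ℕ)) : Prop := ∃ s, IsLaverTreeWithStem T s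

/-!
Call a family `D` of Laver trees open if it is closed under Laver subtrees, and dense below `T`
if every Laver subtree of `T` has a Laver subtree in `D`. The heart of the proof is fusion: for
open families `D k` dense below a Laver tree `T` with stem `s` there is a Laver tree `S ⊆ T`
with stem `s` every branch of which passes, for each `k`, through a node `t` with
`subtreeAt S t ∈ D k`. For one family this is a rank argument: if infinitely many successors of
a node admit such subtrees, their union is one for the node itself; so if the stem admitted
none, the nodes with no such ancestor would form a Laver tree, and its subtree in `D` gives a
contradiction. For countably many families one treats `D k` above each node of length
`|s| + k` and intersects, every step freezing one more level of the tree.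

Fusion and induction on Borel sets show that every Laver tree has a Laver subtree whose branches
lie inside or outside a given Borel set (for a countable union, fuse the families of subtrees
avoiding each piece). Fusing the families on which the `k`-th bit of `f` is constant then yields
`S` on whose branches every bit of `f` is locally constant.
-/

open PiNat

@[simp]
theorem length_seqTake (r : ℕ → ℕ) (n : ℕ) : (seqTake r n).length = n := by
  simp [seqTake]

theorem seqTake_prefix_seqTake (r : ℕ → ℕ) {m n : ℕ} (h : m ≤ n) :
    seqTake r m <+: seqTake r n := by
  rw [List.prefix_iff_eq_take]
  refine List.ext_getElem (by simp [h]) fun i _ _ => ?_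
  simp [seqTake]

theorem seqTake_eq_seqTake_iff {r r' : ℕ → ℕ} {n : ℕ} :
    seqTake r' n = seqTake r n ↔ r' ∈ cylinder r n := by
  simp [seqTake, List.ofFn_inj, funext_iff, mem_cylinder_iff, Fin.forall_iff]

theorem branches_mono {S T : Set (List ℕ)} (h : S ⊆ T) : branches S ⊆ branches T :=
  fun _ hr n => h (hr n)

theorem isOpen_setOf_seqTake_mem (A : Set (List ℕ)) (n : ℕ) :
    IsOpen {r : ℕ → ℕ | seqTake r n ∈ A} :=
  isOpen_iff_forall_mem_open.2 fun r hr =>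
    ⟨cylinder r n, fun r' hr' => show seqTake r' n ∈ A by rwa [seqTake_eq_seqTake_iff.2 hr'],
      isOpen_cylinder _ r n, self_mem_cylinder r n⟩

theorem isClosed_branches (T : Set (List ℕ)) : IsClosed (branches T) := by
  rw [show branches T = ⋂ n, {r | seqTake r n ∈ T} by ext; simp [branches]]
  exact isClosed_iInter fun n => isOpen_compl_iff.1 (isOpen_setOf_seqTake_mem Tᶜ n)

def subtreeAt (T : Set (List ℕ)) (t : List ℕ) : Set (List ℕ) :=
  {u ∈ T | u <+: t ∨ t <+: u}

theorem subtreeAt_subset (T : Set (List ℕ)) (t : List ℕ) : subtreeAt T t ⊆ T :=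
  fun _ hu => hu.1

theorem subtreeAt_mono {S T : Set (List ℕ)} (h : S ⊆ T) (t : List ℕ) :
    subtreeAt S t ⊆ subtreeAt T t :=
  fun _ hu => ⟨h hu.1, hu.2⟩

theorem subtreeAt_anti (T : Set (List ℕ)) {t t' : List ℕ} (h : t <+: t') :
    subtreeAt T t' ⊆ subtreeAt T t := by
  rintro u ⟨huT, hut' | ht'u⟩
  · exact ⟨huT, List.prefix_or_prefix_of_prefix hut' h⟩
  · exact ⟨huT, Or.inr (h.trans ht'u)⟩

theorem mem_branches_subtreeAt {T : Set (List ℕ)} {t : List ℕ} {r : ℕ → ℕ} :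
    r ∈ branches (subtreeAt T t) ↔ r ∈ branches T ∧ seqTake r t.length = t := by
  refine ⟨fun hr => ⟨fun n => (hr n).1, ?_⟩, fun ⟨hr, hrt⟩ n => ⟨hr n, ?_⟩⟩
  · rcases (hr t.length).2 with h | h
    · exact h.eq_of_length (by simp)
    · exact (h.eq_of_length (by simp)).symm
  · rw [← hrt]
    exact (le_total n t.length).imp (seqTake_prefix_seqTake r) (seqTake_prefix_seqTake r)

theorem mem_branches_subtreeAt_seqTake {T : Set (List ℕ)} {r r' : ℕ → ℕ} {n : ℕ} :
    r' ∈ branches (subtreeAt T (seqTake r n)) ↔ r' ∈ branches T ∧ r' ∈ cylinder r n := by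
  rw [mem_branches_subtreeAt, length_seqTake, seqTake_eq_seqTake_iff]

namespace IsLaverTreeWithStem

variable {T : Set (List ℕ)} {s t u : List ℕ}

theorem stem_mem (h : IsLaverTreeWithStem T s) : s ∈ T := h.1

theorem mem_of_prefix (h : IsLaverTreeWithStem T s) (ht : t ∈ T) (hut : u <+: t) : u ∈ T :=
  h.2.1 t ht u hut

theorem comparable (h : IsLaverTreeWithStem T s) (ht : t ∈ T) : t <+: s ∨ s <+: t :=
  h.2.2.1 t ht

theorem infinite_succ (h : IsLaverTreeWithStem T s) (ht : t ∈ T) (hst : s <+: t) :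
    {n | t ++ [n] ∈ T}.Infinite :=
  h.2.2.2 t ht hst

theorem isLaverTree (h : IsLaverTreeWithStem T s) : IsLaverTree T := ⟨s, h⟩

theorem stem_prefix (h : IsLaverTreeWithStem T s) (ht : t ∈ T) (hl : s.length ≤ t.length) :
    s <+: t :=
  (h.comparable ht).elim (fun hts => hts.eq_of_length_le hl ▸ List.prefix_rfl) id

theorem exists_extension (h : IsLaverTreeWithStem T s) (ht : t ∈ T) {m : ℕ}
    (hsm : s.length ≤ m) (htm : t.length ≤ m) : ∃ a ∈ T, t <+: a ∧ a.length = m := by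
  have above_stem :
      ∀ k, ∀ t ∈ T, s <+: t → ∃ a ∈ T, t <+: a ∧ a.length = t.length + k := by
    intro k
    induction k with
    | zero => exact fun t ht _ => ⟨t, ht, List.prefix_rfl, rfl⟩
    | succ k ih =>
      intro t ht hst
      obtain ⟨a, haT, hta, ha⟩ := ih t ht hst
      obtain ⟨n, hn⟩ := (h.infinite_succ haT (hst.trans hta)).nonempty
      exact ⟨a ++ [n], hn, hta.trans (List.prefix_append a [n]), by simp [ha]; omega⟩
  rcases h.comparable ht with hts | hst
  · obtain ⟨a, haT, hsa, ha⟩ := above_stem (m - s.length) s h.stem_mem List.prefix_rfl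
    exact ⟨a, haT, hts.trans hsa, by omega⟩
  · obtain ⟨a, haT, hta, ha⟩ := above_stem (m - t.length) t ht hst
    exact ⟨a, haT, hta, by omega⟩

protected theorem subtreeAt (h : IsLaverTreeWithStem T s) (ht : t ∈ T) (hst : s <+: t) :
    IsLaverTreeWithStem (subtreeAt T t) t := by
  refine ⟨⟨ht, Or.inl List.prefix_rfl⟩, ?_, fun u hu => hu.2, fun u hu htu => ?_⟩
  · rintro v ⟨hvT, hvt | htv⟩ w hwv
    · exact ⟨h.mem_of_prefix hvT hwv, Or.inl (hwv.trans hvt)⟩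
    · exact ⟨h.mem_of_prefix hvT hwv, List.prefix_or_prefix_of_prefix hwv htv⟩
  · exact (h.infinite_succ hu.1 (hst.trans htu)).mono fun n hn =>
      ⟨hn, Or.inr (htu.trans (List.prefix_append u [n]))⟩

theorem subtreeAt_eq_self (h : IsLaverTreeWithStem T s) (hts : t <+: s) : subtreeAt T t = T := by
  refine Subset.antisymm (subtreeAt_subset T t) fun u hu => ⟨hu, ?_⟩
  rcases h.comparable hu with hus | hsu
  · exact List.prefix_or_prefix_of_prefix hus hts
  · exact Or.inr (hts.trans hsu)

end IsLaverTreeWithStem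

theorem IsLaverTree.subtreeAt {T : Set (List ℕ)} (h : IsLaverTree T) {t : List ℕ}
    (ht : t ∈ T) : IsLaverTree (subtreeAt T t) := by
  obtain ⟨s, h⟩ := h
  rcases h.comparable ht with hts | hst
  · rw [h.subtreeAt_eq_self hts]
    exact h.isLaverTree
  · exact (h.subtreeAt ht hst).isLaverTree

def IsLaverOpen (D : Set (Set (List ℕ))) : Prop :=
  ∀ U ∈ D, ∀ V ⊆ U, IsLaverTree V → V ∈ D

def IsLaverDenseBelow (D : Set (Set (List ℕ))) (T : Set (List ℕ)) : Prop :=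
  ∀ V ⊆ T, IsLaverTree V → ∃ W ⊆ V, IsLaverTree W ∧ W ∈ D

theorem IsLaverDenseBelow.mono {D : Set (Set (List ℕ))} {S T : Set (List ℕ)}
    (h : IsLaverDenseBelow D T) (hST : S ⊆ T) : IsLaverDenseBelow D S :=
  fun V hVS hV => h V (hVS.trans hST) hV

def MeetsAlongBranches (S : Set (List ℕ)) (D : Set (Set (List ℕ))) : Prop :=
  ∀ r ∈ branches S, ∃ n, subtreeAt S (seqTake r n) ∈ D

namespace MeetsAlongBranches

variable {S S' : Set (List ℕ)} {D : Set (Set (List ℕ))}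

theorem of_mem (h : S ∈ D) : MeetsAlongBranches S D :=
  fun _ _ => ⟨0, by simpa [subtreeAt, seqTake] using h⟩

theorem mono (h : MeetsAlongBranches S D) (hD : IsLaverOpen D) (hS'S : S' ⊆ S)
    (hS' : IsLaverTree S') : MeetsAlongBranches S' D := fun r hr =>
  let ⟨n, hn⟩ := h r (branches_mono hS'S hr)
  ⟨n, hD _ hn _ (subtreeAt_mono hS'S _) (hS'.subtreeAt (hr n))⟩

end MeetsAlongBranches

section Amalgam

variable {L : Set (List ℕ)} {m : ℕ} {W : List ℕ → Set (List ℕ)} {s u v : List ℕ}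

def amalgam (L : Set (List ℕ)) (W : List ℕ → Set (List ℕ)) : Set (List ℕ) :=
  ⋃ a ∈ L, W a

theorem mem_amalgam : v ∈ amalgam L W ↔ ∃ a ∈ L, v ∈ W a := by
  simp [amalgam]

variable (hL : ∀ a ∈ L, a.length = m) (hW : ∀ a ∈ L, IsLaverTreeWithStem (W a) a)
include hW

theorem mem_amalgam_of_prefix (hv : v ∈ amalgam L W) (huv : u <+: v) : u ∈ amalgam L W :=
  let ⟨a, ha, hva⟩ := mem_amalgam.1 hv
  mem_amalgam.2 ⟨a, ha, (hW a ha).mem_of_prefix hva huv⟩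

include hL

theorem mem_of_mem_amalgam {a : List ℕ} (ha : a ∈ L) (hv : v ∈ amalgam L W)
    (hav : v <+: a ∨ a <+: v) : v ∈ W a := by
  rcases hav with hva | hav
  · exact (hW a ha).mem_of_prefix (hW a ha).stem_mem hva
  obtain ⟨b, hb, hvb⟩ := mem_amalgam.1 hv
  have hab : a <+: b := by
    rcases (hW b hb).comparable hvb with hvb' | hbv
    · exact hav.trans hvb'
    · exact List.prefix_of_prefix_length_le hav hbv (by rw [hL a ha, hL b hb])
  rwa [hab.eq_of_length (by rw [hL a ha, hL b hb])]

theorem subtreeAt_amalgam_subset {a t : List ℕ} (ha : a ∈ L) (hat : a <+: t) :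
    subtreeAt (amalgam L W) t ⊆ subtreeAt (W a) t := by
  rintro v ⟨hv, hvt | htv⟩
  · exact ⟨mem_of_mem_amalgam hL hW ha hv (List.prefix_or_prefix_of_prefix hvt hat),
      Or.inl hvt⟩
  · exact ⟨mem_of_mem_amalgam hL hW ha hv (Or.inr (hat.trans htv)), Or.inr htv⟩

theorem mem_branches_of_mem_branches_amalgam {r : ℕ → ℕ}
    (hr : r ∈ branches (amalgam L W)) :
    seqTake r m ∈ L ∧ r ∈ branches (W (seqTake r m)) := by
  obtain ⟨a, ha, hra⟩ := mem_amalgam.1 (hr m)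
  have hra : seqTake r m = a := by
    rcases (hW a ha).comparable hra with h | h
    · exact h.eq_of_length (by simp [hL a ha])
    · exact (h.eq_of_length (by simp [hL a ha])).symm
  subst hra
  refine ⟨ha, fun n => mem_of_mem_amalgam hL hW ha (hr n) ?_⟩
  exact (le_total n m).imp (seqTake_prefix_seqTake r) (seqTake_prefix_seqTake r)

theorem isLaverTreeWithStem_amalgam (hs : s ∈ amalgam L W) (hsL : ∀ a ∈ L, s <+: a)
    (hsplit : ∀ u ∈ amalgam L W, s <+: u → u.length < m →
      {n | u ++ [n] ∈ amalgam L W}.Infinite) :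
    IsLaverTreeWithStem (amalgam L W) s := by
  refine ⟨hs, fun v hv u huv => mem_amalgam_of_prefix hW hv huv, fun v hv => ?_,
    fun u hu hsu => ?_⟩
  · obtain ⟨a, ha, hva⟩ := mem_amalgam.1 hv
    rcases (hW a ha).comparable hva with hva | hav
    · exact List.prefix_or_prefix_of_prefix hva (hsL a ha)
    · exact Or.inr ((hsL a ha).trans hav)
  by_cases hum : u.length < m
  · exact hsplit u hu hsu hum
  obtain ⟨a, ha, hua⟩ := mem_amalgam.1 hu
  have hau : a <+: u := by
    rcases (hW a ha).comparable hua with hua' | hau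
    · rw [hua'.eq_of_length_le (by rw [hL a ha]; omega)]
    · exact hau
  exact ((hW a ha).infinite_succ hua hau).mono fun n hn => mem_amalgam.2 ⟨a, ha, hn⟩

theorem meetsAlongBranches_amalgam {D : Set (Set (List ℕ))} (hD : IsLaverOpen D)
    (hU : IsLaverTree (amalgam L W)) (hmeet : ∀ a ∈ L, MeetsAlongBranches (W a) D) :
    MeetsAlongBranches (amalgam L W) D := by
  intro r hr
  obtain ⟨ha, hra⟩ := mem_branches_of_mem_branches_amalgam hL hW hr
  obtain ⟨n, hn⟩ := hmeet _ ha r hra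
  refine ⟨max n m, hD _ hn _ ?_ (hU.subtreeAt (hr _))⟩
  exact (subtreeAt_amalgam_subset hL hW ha (seqTake_prefix_seqTake r (le_max_right n m))).trans
    (subtreeAt_anti _ (seqTake_prefix_seqTake r (le_max_left n m)))

end Amalgam
def HasMeetingSubtree (T : Set (List ℕ)) (D : Set (Set (List ℕ))) (t : List ℕ) : Prop :=
  ∃ U ⊆ T, IsLaverTreeWithStem U t ∧ MeetsAlongBranches U D

theorem HasMeetingSubtree.of_infinite {T : Set (List ℕ)} {D : Set (Set (List ℕ))} {t : List ℕ}
    (hD : IsLaverOpen D) (hI : {n | HasMeetingSubtree T D (t ++ [n])}.Infinite) :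
    HasMeetingSubtree T D t := by
  choose! W hWT hW hWD using fun a (h : HasMeetingSubtree T D a) => h
  set I := {n | HasMeetingSubtree T D (t ++ [n])}
  set L := (fun n => t ++ [n]) '' I
  have hL : ∀ a ∈ L, a.length = t.length + 1 := by
    rintro _ ⟨n, -, rfl⟩
    simp
  have hWL : ∀ a ∈ L, IsLaverTreeWithStem (W a) a := by
    rintro _ ⟨n, hn, rfl⟩
    exact hW _ hn
  have hsucc : ∀ n ∈ I, t ++ [n] ∈ amalgam L W := fun n hn =>
    mem_amalgam.2 ⟨_, ⟨n, hn, rfl⟩, (hW _ hn).stem_mem⟩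
  obtain ⟨n, hn⟩ := hI.nonempty
  have hU : IsLaverTreeWithStem (amalgam L W) t := by
    refine isLaverTreeWithStem_amalgam hL hWL
      (mem_amalgam_of_prefix hWL (hsucc n hn) (List.prefix_append t [n])) ?_ ?_
    · rintro _ ⟨n, -, rfl⟩
      exact List.prefix_append t [n]
    · intro u _ htu hu
      rw [← htu.eq_of_length_le (by omega)]
      exact hI.mono hsucc
  refine ⟨amalgam L W, fun u hu => ?_, hU,
    meetsAlongBranches_amalgam hL hWL hD hU.isLaverTree ?_⟩
  · obtain ⟨_, ⟨n, hn, rfl⟩, hu⟩ := mem_amalgam.1 hu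
    exact hWT _ hn hu
  · rintro _ ⟨n, hn, rfl⟩
    exact hWD _ hn

theorem IsLaverTreeWithStem.hasMeetingSubtree {T : Set (List ℕ)} {s : List ℕ}
    {D : Set (Set (List ℕ))} (hT : IsLaverTreeWithStem T s) (hD : IsLaverOpen D)
    (hden : IsLaverDenseBelow D T) : HasMeetingSubtree T D s := by
  by_contra hs
  set V := {u ∈ T | ∀ w, w <+: u → s <+: w → ¬ HasMeetingSubtree T D w}
  have hV : IsLaverTreeWithStem V s := by
    refine ⟨⟨hT.stem_mem, fun w hws hsw => ?_⟩, ?_, fun u hu => hT.comparable hu.1, ?_⟩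
    · rwa [hws.eq_of_length_le hsw.length_le]
    · rintro v ⟨hvT, hv⟩ u huv
      exact ⟨hT.mem_of_prefix hvT huv, fun w hwu => hv w (hwu.trans huv)⟩
    · rintro u ⟨huT, hu⟩ hsu
      have hfin : {n | HasMeetingSubtree T D (u ++ [n])}.Finite :=
        not_infinite.1 fun hinf => hu u List.prefix_rfl hsu (.of_infinite hD hinf)
      refine ((hT.infinite_succ huT hsu).sdiff hfin).mono ?_
      rintro n ⟨hnT, hn⟩
      refine ⟨hnT, fun w hw hsw => ?_⟩
      rcases List.prefix_concat_iff.1 hw with rfl | hwu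
      · exact hn
      · exact hu w hwu hsw
  obtain ⟨W, hWV, ⟨s', hW⟩, hWD⟩ := hden V (fun u hu => hu.1) hV.isLaverTree
  obtain ⟨a, haW, hs'a, ha⟩ :=
    hW.exists_extension hW.stem_mem (le_max_left s'.length s.length) (le_max_left _ _)
  have hsa : s <+: a := hV.stem_prefix (hWV haW) (ha ▸ le_max_right _ _)
  have hWa := hW.subtreeAt haW hs'a
  exact (hWV haW).2 a List.prefix_rfl hsa ⟨subtreeAt W a,
    (subtreeAt_subset W a).trans (hWV.trans fun u hu => hu.1), hWa,
    .of_mem (hD W hWD _ (subtreeAt_subset W a) hWa.isLaverTree)⟩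

theorem IsLaverTreeWithStem.exists_meetsAlongBranches {S : Set (List ℕ)} {s : List ℕ}
    {D : Set (Set (List ℕ))} {m : ℕ} (hS : IsLaverTreeWithStem S s) (hm : s.length ≤ m)
    (hD : IsLaverOpen D) (hden : IsLaverDenseBelow D S) :
    ∃ S' ⊆ S, IsLaverTreeWithStem S' s ∧ (∀ u ∈ S, u.length ≤ m → u ∈ S') ∧
      MeetsAlongBranches S' D := by
  set L := {a ∈ S | a.length = m}
  have hL : ∀ a ∈ L, a.length = m := fun a ha => ha.2
  have hsL : ∀ a ∈ L, s <+: a := fun a ha => hS.stem_prefix ha.1 (ha.2 ▸ hm)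
  choose! W hWS hW hWD using fun a (ha : a ∈ L) =>
    (hS.subtreeAt ha.1 (hsL a ha)).hasMeetingSubtree hD (hden.mono (subtreeAt_subset S a))
  have hsub : amalgam L W ⊆ S := fun u hu =>
    let ⟨a, ha, hua⟩ := mem_amalgam.1 hu
    subtreeAt_subset S a (hWS a ha hua)
  have hagree : ∀ u ∈ S, u.length ≤ m → u ∈ amalgam L W := fun u huS hu =>
    let ⟨a, haS, hua, ha⟩ := hS.exists_extension huS hm hu
    mem_amalgam_of_prefix hW
      (mem_amalgam.2 ⟨a, ⟨haS, ha⟩, (hW a ⟨haS, ha⟩).stem_mem⟩) hua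
  have hU : IsLaverTreeWithStem (amalgam L W) s :=
    isLaverTreeWithStem_amalgam hL hW (hagree s hS.stem_mem hm) hsL fun u hu hsu hum =>
      (hS.infinite_succ (hsub hu) hsu).mono fun n hn => hagree _ hn (by simp; omega)
  exact ⟨_, hsub, hU, hagree, meetsAlongBranches_amalgam hL hW hD hU.isLaverTree hWD⟩

theorem isLaverTreeWithStem_iInter {S : ℕ → Set (List ℕ)} {s : List ℕ}
    (hS : ∀ k, IsLaverTreeWithStem (S k) s) (hanti : ∀ k, S (k + 1) ⊆ S k)
    (hagree : ∀ k, ∀ u ∈ S k, u.length ≤ s.length + k → u ∈ S (k + 1)) :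
    IsLaverTreeWithStem (⋂ k, S k) s := by
  have hmem : ∀ k, ∀ u ∈ S k, u.length ≤ s.length + k → u ∈ ⋂ j, S j := by
    refine fun k u huk hu => mem_iInter.2 fun j => ?_
    rcases le_total j k with hjk | hkj
    · exact antitone_nat_of_succ_le hanti hjk huk
    · induction j, hkj using Nat.le_induction with
      | base => exact huk
      | succ j hkj ih => exact hagree j u ih (by omega)
  refine ⟨mem_iInter.2 fun k => (hS k).stem_mem,
    fun t ht u hut => mem_iInter.2 fun k => (hS k).mem_of_prefix (mem_iInter.1 ht k) hut,
    fun t ht => (hS 0).comparable (mem_iInter.1 ht 0), fun t ht hst => ?_⟩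
  exact ((hS (t.length + 1)).infinite_succ (mem_iInter.1 ht _) hst).mono fun n hn =>
    hmem _ _ hn (by simp)

theorem IsLaverTreeWithStem.exists_meetsAlongBranches_forall {T : Set (List ℕ)} {s : List ℕ}
    {D : ℕ → Set (Set (List ℕ))} (hT : IsLaverTreeWithStem T s)
    (hD : ∀ k, IsLaverOpen (D k))
    (hden : ∀ k, IsLaverDenseBelow (D k) T) :
    ∃ S ⊆ T, IsLaverTreeWithStem S s ∧ ∀ k, MeetsAlongBranches S (D k) := by
  let LaverBelow := {S // S ⊆ T ∧ IsLaverTreeWithStem S s}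
  have step : ∀ (k : ℕ) (S : LaverBelow), ∃ S' : LaverBelow, S'.1 ⊆ S.1 ∧
      (∀ u ∈ S.1, u.length ≤ s.length + k → u ∈ S'.1) ∧
      MeetsAlongBranches S'.1 (D k) := by
    rintro k ⟨S, hST, hS⟩
    obtain ⟨S', hS'S, hS', hagree, hmeet⟩ :=
      hS.exists_meetsAlongBranches (Nat.le_add_right _ k) (hD k) ((hden k).mono hST)
    exact ⟨⟨S', hS'S.trans hST, hS'⟩, hS'S, hagree, hmeet⟩
  choose next hsub hagree hmeet using step
  let F : ℕ → LaverBelow := fun k => Nat.rec ⟨T, subset_rfl, hT⟩ next k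
  have hF := isLaverTreeWithStem_iInter (fun k => (F k).2.2) (fun k => hsub k (F k))
    (fun k => hagree k (F k))
  exact ⟨⋂ k, (F k).1, iInter_subset_of_subset 0 (F 0).2.1, hF, fun k =>
    (hmeet k (F k)).mono (hD k) (iInter_subset _ (k + 1)) hF.isLaverTree⟩

theorem IsLaverTree.exists_subtree_subset_or_disjoint_of_isOpen {U : Set (List ℕ)}
    {B : Set (ℕ → ℕ)} (hU : IsLaverTree U) (hB : IsOpen B) :
    ∃ V ⊆ U, IsLaverTree V ∧ (branches V ⊆ B ∨ Disjoint (branches V) B) := by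
  by_cases hdisj : Disjoint (branches U) B
  · exact ⟨U, subset_rfl, hU, Or.inr hdisj⟩
  obtain ⟨s, hU⟩ := hU
  obtain ⟨r, hrU, hrB⟩ := not_disjoint_iff.1 hdisj
  obtain ⟨_, ⟨x, n, rfl⟩, hrx, hxB⟩ :=
    (isTopologicalBasis_cylinders fun _ : ℕ => ℕ).exists_subset_of_mem_open hrB hB
  rw [← mem_cylinder_iff_eq.1 hrx] at hxB
  have hst : s <+: seqTake r (max n s.length) := hU.stem_prefix (hrU _) (by simp)
  refine ⟨_, subtreeAt_subset U _, (hU.subtreeAt (hrU _) hst).isLaverTree,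
    Or.inl fun r' hr' => ?_⟩
  exact hxB (cylinder_anti r (le_max_left _ _) (mem_branches_subtreeAt_seqTake.1 hr').2)

theorem IsLaverTree.exists_subtree_subset_or_disjoint {U : Set (List ℕ)} {B : Set (ℕ → ℕ)}
    (hU : IsLaverTree U) (hB : MeasurableSet B) :
    ∃ V ⊆ U, IsLaverTree V ∧ (branches V ⊆ B ∨ Disjoint (branches V) B) := by
  induction B, hB using MeasurableSet.induction_on_open generalizing U with
  | isOpen B hB => exact hU.exists_subtree_subset_or_disjoint_of_isOpen hB
  | compl B _ ih =>
    obtain ⟨V, hVU, hV, h⟩ := ih hU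
    exact ⟨V, hVU, hV, h.symm.imp subset_compl_iff_disjoint_right.2
      disjoint_compl_right_iff_subset.2⟩
  | iUnion g _ _ ih =>
    by_cases hin : ∃ i, ∃ V ⊆ U, IsLaverTree V ∧ branches V ⊆ g i
    · obtain ⟨i, V, hVU, hV, hVg⟩ := hin
      exact ⟨V, hVU, hV, Or.inl (hVg.trans (subset_iUnion g i))⟩
    push Not at hin
    let D : ℕ → Set (Set (List ℕ)) := fun i => {W | Disjoint (branches W) (g i)}
    have hD : ∀ i, IsLaverOpen (D i) := fun i W hW V hVW _ =>
      Disjoint.mono_left (branches_mono hVW) hW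
    have hden : ∀ i, IsLaverDenseBelow (D i) U := fun i V hVU hV =>
      let ⟨W, hWV, hW, h⟩ := ih i hV
      ⟨W, hWV, hW, h.resolve_left (hin i W (hWV.trans hVU) hW)⟩
    obtain ⟨s, hU⟩ := hU
    obtain ⟨S, hSU, hS, hmeet⟩ := hU.exists_meetsAlongBranches_forall hD hden
    refine ⟨S, hSU, hS.isLaverTree, Or.inr (disjoint_iUnion_right.2 fun i => ?_)⟩
    refine disjoint_left.2 fun r hr => ?_
    obtain ⟨n, hn⟩ := hmeet i r hr
    exact disjoint_left.1 hn (mem_branches_subtreeAt_seqTake.2 ⟨hr, self_mem_cylinder r n⟩)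

theorem MeasurableSet.inter_preimage_of_measurable_domRestrict {α β : Type*} [MeasurableSpace α]
    [MeasurableSpace β] {s : Set α} {f : α → β} {A : Set β} (hs : MeasurableSet s)
    (hf : Measurable (s.domRestrict f)) (hA : MeasurableSet A) :
    MeasurableSet (s ∩ f ⁻¹' A) := by
  rw [← Subtype.image_preimage_coe]
  exact hs.subtype_image (hf hA)

theorem continuousOn_of_forall_exists_cylinder {ι X : Type*} [TopologicalSpace X]
    {f : (ℕ → ℕ) → ι → X} {C : Set (ℕ → ℕ)}
    (h : ∀ r ∈ C, ∀ k, ∃ n, ∀ r' ∈ C ∩ cylinder r n, f r' k = f r k) :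
    ContinuousOn f C := by
  refine continuousOn_pi.2 fun k r hr => ?_
  obtain ⟨n, hn⟩ := h r hr k
  refine continuousWithinAt_const.congr_of_eventuallyEq ?_ rfl
  filter_upwards [inter_mem_nhdsWithin C ((isOpen_cylinder _ r n).mem_nhds (self_mem_cylinder r n))]
    with r' hr' using hn r' hr'

theorem isLaverDenseBelow_setOf_forall_apply_eq {T : Set (List ℕ)}
    {f : (ℕ → ℕ) → ℕ → Bool} (hf : Measurable ((branches T).domRestrict f)) (k : ℕ) :
    IsLaverDenseBelow {W | ∃ b, ∀ r ∈ branches W, f r k = b} T := by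
  intro V hVT hV
  have hB := (isClosed_branches T).measurableSet.inter_preimage_of_measurable_domRestrict hf
    (measurable_pi_apply k (measurableSet_singleton true))
  obtain ⟨W, hWV, hW, hWB | hWB⟩ := hV.exists_subtree_subset_or_disjoint hB
  · exact ⟨W, hWV, hW, true, fun r hr => (hWB hr).2⟩
  · refine ⟨W, hWV, hW, false, fun r hr => ?_⟩
    have hrT : r ∈ branches T := branches_mono (hWV.trans hVT) hr
    simpa using fun h => disjoint_left.1 hWB hr ⟨hrT, h⟩

/-- For every Laver tree `T` and every Borel function `f : [T] → 2^ω` there is a Laver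
tree `S ⊆ T` such that `f` restricted to `[S]` is continuous. -/
theorem laver_continuous_reading
    (T : Set (List ℕ)) (hT : IsLaverTree T)
    (f : (ℕ → ℕ) → (ℕ → Bool)) (hf : Measurable ((branches T).restrict f)) :
    ∃ S : Set (List ℕ), IsLaverTree S ∧ S ⊆ T ∧ ContinuousOn f (branches S) := by
  obtain ⟨s, hT⟩ := hT
  have hD : ∀ k, IsLaverOpen {W | ∃ b, ∀ r ∈ branches W, f r k = b} :=
    fun k W ⟨b, hb⟩ V hVW _ => ⟨b, fun r hr => hb r (branches_mono hVW hr)⟩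
  obtain ⟨S, hST, hS, hmeet⟩ :=
    hT.exists_meetsAlongBranches_forall hD (isLaverDenseBelow_setOf_forall_apply_eq hf)
  refine ⟨S, hS.isLaverTree, hST, continuousOn_of_forall_exists_cylinder fun r hr k => ?_⟩
  obtain ⟨n, b, hb⟩ := hmeet k r hr
  refine ⟨n, fun r' hr' => ?_⟩
  rw [hb r' (mem_branches_subtreeAt_seqTake.2 hr'),
    hb r (mem_branches_subtreeAt_seqTake.2 ⟨hr, self_mem_cylinder r n⟩)]
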